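/- The KL divergence between two Bernoulli distributions with parameters $p = \delta + \langle \theta', a\rangle$ and $q = \delta + \langle \theta, a\rangle$, where $\theta, \theta' \in \{-\Delta/(d-1), \Delta/(d-1)\}^{d-1}$ differ in exactly one coordinate and $a \in \{-1,1\}^{d-1}$, satisfies $\mathrm{KL}(p\|q) \le \frac{16\Delta^2}{(d-1)^2 \delta}$, provided $4\Delta < \delta \le 1/3$. -/

import Mathlib

/-!
Bounding each logarithm by `log x ≤ x - 1` turns the Bernoulli KL divergence into the
χ²-divergence `(p - q)² / (q (1 - q))`. Since θ and θ' differ in one coordinate,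
`(p - q)² = 4Δ² / (d - 1)²`, and since `|q - δ| ≤ Δ < δ / 4` with `δ ≤ 1/3`, the denominator
`q (1 - q)` is at least `δ / 4`.
-/

open Real Finset

lemma mul_log_div_le_mul_div_sub_one {x y : ℝ} (hx : 0 ≤ x) (hy : 0 < y) :
    x * log (x / y) ≤ x * (x / y - 1) := by
  rcases hx.eq_or_lt with rfl | hx
  · simp
  · exact mul_le_mul_of_nonneg_left (log_le_sub_one_of_pos (div_pos hx hy)) hx.le

lemma bernoulli_kl_le_chiSq {p q : ℝ} (hp0 : 0 ≤ p) (hp1 : p ≤ 1) (hq0 : 0 < q) (hq1 : q < 1) :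
    p * log (p / q) + (1 - p) * log ((1 - p) / (1 - q)) ≤ (p - q) ^ 2 / (q * (1 - q)) := by
  have hq1' : 0 < 1 - q := sub_pos.2 hq1
  refine (add_le_add (mul_log_div_le_mul_div_sub_one hp0 hq0)
    (mul_log_div_le_mul_div_sub_one (sub_nonneg.2 hp1) hq1')).trans_eq ?_
  field_simp
  ring

lemma abs_sum_mul_le_card_mul {ι : Type*} [Fintype ι] {f g : ι → ℝ} {c : ℝ}
    (hf : ∀ i, |f i| ≤ c) (hg : ∀ i, |g i| ≤ 1) :
    |∑ i, f i * g i| ≤ Fintype.card ι * c := by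
  refine (abs_sum_le_sum_abs _ _).trans ?_
  rw [← nsmul_eq_mul, ← Finset.card_univ]
  refine sum_le_card_nsmul _ _ _ fun i _ => ?_
  rw [abs_mul]
  nlinarith [hf i, hg i, abs_nonneg (f i), abs_nonneg (g i)]

lemma sum_mul_sub_sum_mul_of_eq_of_ne {ι R : Type*} [Fintype ι] [CommRing R] {f f' g : ι → R}
    {j : ι} (h : ∀ i, i ≠ j → f' i = f i) :
    ∑ i, f' i * g i - ∑ i, f i * g i = (f' j - f j) * g j := by
  rw [← sum_sub_distrib]
  simp_rw [← sub_mul]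
  exact sum_eq_single j (fun i _ hi => by rw [h i hi, sub_self, zero_mul]) (by simp)

lemma sub_sq_eq_four_mul_sq_of_ne {R : Type*} [CommRing R] {x y c : R}
    (hx : x = c ∨ x = -c) (hy : y = c ∨ y = -c) (hxy : x ≠ y) :
    (x - y) ^ 2 = 4 * c ^ 2 := by
  rcases hx with rfl | rfl <;> rcases hy with rfl | rfl
  all_goals first | exact absurd rfl hxy | ring

lemma le_four_mul_mul_one_sub {δ q : ℝ} (hδ1 : δ ≤ 1 / 3) (hq : |q - δ| ≤ δ / 4) :
    δ ≤ 4 * (q * (1 - q)) := by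
  obtain ⟨hlo, hhi⟩ := abs_le.1 hq
  nlinarith [mul_nonneg (show 0 ≤ q - 3 * δ / 4 by linarith) (show 0 ≤ 1 - q by linarith),
    mul_nonneg (show 0 ≤ δ by linarith) (show 0 ≤ 1 - q - 7 / 12 by linarith)]

theorem stmt_2_general (d : ℕ) (δ Δ : ℝ) (hΔ : 0 < Δ)
    (hδ : 4 * Δ < δ) (hδ1 : δ ≤ 1/3)
    (θ θ' : Fin (d-1) → ℝ) (a : Fin (d-1) → ℝ)
    (hθ : ∀ i, θ i = Δ/(d-1) ∨ θ i = -(Δ/(d-1)))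
    (hθ' : ∀ i, θ' i = Δ/(d-1) ∨ θ' i = -(Δ/(d-1)))
    (ha : ∀ i, a i = 1 ∨ a i = -1)
    (hdiff : ∃ j, θ' j ≠ θ j ∧ ∀ i, i ≠ j → θ' i = θ i)
    (p q : ℝ)
    (hp : p = δ + ∑ i, θ' i * a i) (hq : q = δ + ∑ i, θ i * a i) :
    p * Real.log (p / q) + (1 - p) * Real.log ((1 - p) / (1 - q))
      ≤ 16 * Δ^2 / ((d-1)^2 * δ) := by
  obtain ⟨j, hj, hjeq⟩ := hdiff
  have hd : 1 < d := by have := j.pos; omega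
  have hd' : (0 : ℝ) < d - 1 := sub_pos.2 (by exact_mod_cast hd)
  have hc : 0 < Δ / (d - 1) := div_pos hΔ hd'
  have hsum : ∀ θ : Fin (d-1) → ℝ, (∀ i, θ i = Δ/(d-1) ∨ θ i = -(Δ/(d-1))) →
      |∑ i, θ i * a i| ≤ Δ := fun θ hθ => by
    have := abs_sum_mul_le_card_mul (f := θ) (g := a) (c := Δ / (d - 1))
      (fun i => by rcases hθ i with h | h <;> simp [h, abs_of_pos hc])
      (fun i => by rcases ha i with h | h <;> simp [h])
    rwa [Fintype.card_fin, Nat.cast_sub (by omega), Nat.cast_one,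
      mul_div_cancel₀ _ hd'.ne'] at this
  have hpq : (p - q) ^ 2 = 4 * Δ ^ 2 / (d - 1) ^ 2 := by
    rw [hp, hq, add_sub_add_left_eq_sub, sum_mul_sub_sum_mul_of_eq_of_ne hjeq, mul_pow,
      sub_sq_eq_four_mul_sq_of_ne (hθ' j) (hθ j) hj]
    rcases ha j with h | h <;> simp [h, div_pow, mul_div_assoc]
  obtain ⟨hθlo, hθhi⟩ := abs_le.1 (hsum θ hθ)
  obtain ⟨hθ'lo, hθ'hi⟩ := abs_le.1 (hsum θ' hθ')
  have hqδ : δ ≤ 4 * (q * (1 - q)) :=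
    le_four_mul_mul_one_sub hδ1 (abs_le.2 ⟨by linarith, by linarith⟩)
  calc p * Real.log (p / q) + (1 - p) * Real.log ((1 - p) / (1 - q))
      ≤ (p - q) ^ 2 / (q * (1 - q)) := bernoulli_kl_le_chiSq (by linarith) (by linarith)
        (by linarith) (by linarith)
    _ = 4 * Δ ^ 2 / (d - 1) ^ 2 / (q * (1 - q)) := by rw [hpq]
    _ ≤ 4 * Δ ^ 2 / (d - 1) ^ 2 / (δ / 4) :=
        div_le_div_of_nonneg_left (by positivity) (by linarith) (by linarith)
    _ = 16 * Δ^2 / ((d-1)^2 * δ) := by field_simp; ring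

/-- KL divergence bound between two Bernoulli distributions in the hard instance. -/
theorem stmt_2 (d : ℕ) (hd : 2 ≤ d) (δ Δ : ℝ) (hΔ : 0 < Δ)
    (hδ : 4 * Δ < δ) (hδ1 : δ ≤ 1/3)
    (θ θ' : Fin (d-1) → ℝ) (a : Fin (d-1) → ℝ)
    (hθ : ∀ i, θ i = Δ/(d-1) ∨ θ i = -(Δ/(d-1)))
    (hθ' : ∀ i, θ' i = Δ/(d-1) ∨ θ' i = -(Δ/(d-1)))
    (ha : ∀ i, a i = 1 ∨ a i = -1)
    (hdiff : ∃ j, θ' j ≠ θ j ∧ ∀ i, i ≠ j → θ' i = θ i)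
    (p q : ℝ)
    (hp : p = δ + ∑ i, θ' i * a i) (hq : q = δ + ∑ i, θ i * a i) :
    p * Real.log (p / q) + (1 - p) * Real.log ((1 - p) / (1 - q))
      ≤ 16 * Δ^2 / ((d-1)^2 * δ) :=
  stmt_2_general d δ Δ hΔ hδ hδ1 θ θ' a hθ hθ' ha hdiff p q hp hq
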